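/- Let G be a finite noncyclic group and suppose exactly m distinct noncyclic proper subgroups of G appear in some irredundant cover of G. Then m + 1 ≤ β(G) ≤ 2^m, where β(G) is the number of irredundant covers of G. -/

import Mathlib

/-- A cover of a group: a finite collection of proper subgroups whose union is the group. -/
def IsCover {G : Type*} [Group G] (S : Finset (Subgroup G)) : Prop :=
  (∀ H ∈ S, H ≠ ⊤) ∧ ∀ g : G, ∃ H ∈ S, g ∈ H

/-- An irredundant cover: a cover with no proper subcollection that is also a cover. -/
def IsIrredundantCover {G : Type*} [Group G] (S : Finset (Subgroup G)) : Prop :=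
  IsCover S ∧ ∀ T : Finset (Subgroup G), T ⊂ S → ¬ IsCover T

/-- β(G): the number of irredundant covers of G. -/
noncomputable def beta (G : Type*) [Group G] : ℕ :=
  Nat.card {S : Finset (Subgroup G) // IsIrredundantCover S}

/-- A maximal cyclic subgroup: cyclic, and not contained in any strictly larger cyclic subgroup. -/
def IsMaximalCyclic {G : Type*} [Group G] (C : Subgroup G) : Prop :=
  IsCyclic ↥C ∧ ∀ D : Subgroup G, IsCyclic ↥D → C ≤ D → D = C

/-- A cyclically embedded subgroup: ⟨N, x⟩ is cyclic for all x. -/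
def CyclicallyEmbedded {G : Type*} [Group G] (N : Subgroup G) : Prop :=
  ∀ x : G, IsCyclic ↥(N ⊔ Subgroup.zpowers x)

/-!
An irredundant cover `S` is determined by its noncyclic members `N`: every other member is a
maximal cyclic subgroup, and these are exactly the maximal cyclic subgroups lying in no member of
`N`. So `S ↦ N` injects the irredundant covers into the subsets of `M`, giving `β(G) ≤ 2^m`.
Conversely, for any subcollection `N` of an irredundant cover, `N` together with the maximal
cyclic subgroups outside `N` is again an irredundant cover; taking `N = ∅` and `N = {H}` for
`H ∈ M` gives `m + 1` distinct irredundant covers.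
-/

section

open scoped Classical

variable {G : Type*} [Group G]

lemma exists_isMaximalCyclic_mem [Finite G] (g : G) :
    ∃ C : Subgroup G, IsMaximalCyclic C ∧ g ∈ C := by
  obtain ⟨C, hgC, hC⟩ :=
    Finite.exists_le_maximal (p := fun C : Subgroup G => IsCyclic C) (Subgroup.isCyclic_zpowers g)
  exact ⟨C, ⟨hC.1, fun D hD hCD => le_antisymm (hC.2 hD hCD) hCD⟩, hgC (Subgroup.mem_zpowers g)⟩

lemma IsMaximalCyclic.ne_top (hG : ¬ IsCyclic G) {C : Subgroup G} (hC : IsMaximalCyclic C) :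
    C ≠ ⊤ := by
  obtain ⟨g, rfl⟩ := C.isCyclic_iff_exists_zpowers_eq_top.mp hC.1
  exact fun h => hG (isCyclic_iff_exists_zpowers_eq_top.mpr ⟨g, h⟩)

namespace IsIrredundantCover

variable {S : Finset (Subgroup G)}

lemma exists_mem_only (hS : IsIrredundantCover S) {K : Subgroup G} (hK : K ∈ S) :
    ∃ x ∈ K, ∀ H ∈ S, x ∈ H → H = K := by
  have hx : ¬ IsCover (S.erase K) := hS.2 _ (Finset.erase_ssubset hK)
  simp only [IsCover, not_and, not_forall, not_exists] at hx
  obtain ⟨x, hx⟩ := hx fun H hH => hS.1.1 H (Finset.mem_of_mem_erase hH)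
  have honly : ∀ H ∈ S, x ∈ H → H = K := fun H hH hxH =>
    by_contra fun hne => hx H (Finset.mem_erase.mpr ⟨hne, hH⟩) hxH
  obtain ⟨H, hHS, hxH⟩ := hS.1.2 x
  exact ⟨x, honly H hHS hxH ▸ hxH, honly⟩

lemma eq_of_le (hS : IsIrredundantCover S) {K H : Subgroup G} (hK : K ∈ S) (hH : H ∈ S)
    (hKH : K ≤ H) : H = K := by
  obtain ⟨x, hxK, hx⟩ := hS.exists_mem_only hK
  exact hx H hH (hKH hxK)

lemma isMaximalCyclic_of_mem (hS : IsIrredundantCover S) {C : Subgroup G} (hC : C ∈ S)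
    (hCc : IsCyclic C) : IsMaximalCyclic C := by
  refine ⟨hCc, fun D hD hCD => le_antisymm ?_ hCD⟩
  obtain ⟨g, rfl⟩ := D.isCyclic_iff_exists_zpowers_eq_top.mp hD
  obtain ⟨K, hK, hgK⟩ := hS.1.2 g
  have hDK : Subgroup.zpowers g ≤ K := Subgroup.zpowers_le.mpr hgK
  exact hS.eq_of_le hC hK (hCD.trans hDK) ▸ hDK

lemma mem_of_isMaximalCyclic (hS : IsIrredundantCover S) {C : Subgroup G}
    (hC : IsMaximalCyclic C) (hCS : ∀ H ∈ S, ¬ IsCyclic H → ¬ C ≤ H) : C ∈ S := by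
  obtain ⟨g, rfl⟩ := C.isCyclic_iff_exists_zpowers_eq_top.mp hC.1
  obtain ⟨K, hK, hgK⟩ := hS.1.2 g
  have hCK : Subgroup.zpowers g ≤ K := Subgroup.zpowers_le.mpr hgK
  by_cases hKc : IsCyclic K
  · exact hC.2 K hKc hCK ▸ hK
  · exact absurd hCK (hCS K hK hKc)

end IsIrredundantCover

lemma isIrredundantCover_of_forall_exists_mem_only {S : Finset (Subgroup G)} (hS : IsCover S)
    (honly : ∀ K ∈ S, ∃ x : G, ∀ H ∈ S, x ∈ H → H = K) : IsIrredundantCover S := by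
  refine ⟨hS, fun T hTS hT => ?_⟩
  obtain ⟨K, hKS, hKT⟩ := Finset.exists_of_ssubset hTS
  obtain ⟨x, hx⟩ := honly K hKS
  obtain ⟨H, hHT, hxH⟩ := hT.2 x
  exact hKT (hx H (hTS.1 hHT) hxH ▸ hHT)

noncomputable def noncyclicPart (S : Finset (Subgroup G)) : Finset (Subgroup G) :=
  S.filter fun H => ¬ IsCyclic H

lemma mem_noncyclicPart {S : Finset (Subgroup G)} {H : Subgroup G} :
    H ∈ noncyclicPart S ↔ H ∈ S ∧ ¬ IsCyclic H := by
  simp [noncyclicPart]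

lemma beta_eq_ncard : beta G = {S : Finset (Subgroup G) | IsIrredundantCover S}.ncard :=
  rfl

section Finite

variable [Finite G]

noncomputable def maxCyclicOutside (N : Finset (Subgroup G)) : Finset (Subgroup G) :=
  (Set.toFinite {C : Subgroup G | IsMaximalCyclic C ∧ ∀ H ∈ N, ¬ C ≤ H}).toFinset

lemma mem_maxCyclicOutside {N : Finset (Subgroup G)} {C : Subgroup G} :
    C ∈ maxCyclicOutside N ↔ IsMaximalCyclic C ∧ ∀ H ∈ N, ¬ C ≤ H := by
  simp [maxCyclicOutside]

lemma IsIrredundantCover.eq_noncyclicPart_union {S : Finset (Subgroup G)}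
    (hS : IsIrredundantCover S) : S = noncyclicPart S ∪ maxCyclicOutside (noncyclicPart S) := by
  ext C
  simp only [Finset.mem_union, mem_maxCyclicOutside, mem_noncyclicPart]
  constructor
  · intro hC
    by_cases hCc : IsCyclic C
    · refine .inr ⟨hS.isMaximalCyclic_of_mem hC hCc, fun H ⟨hH, hHc⟩ hCH => hHc ?_⟩
      exact hS.eq_of_le hC hH hCH ▸ hCc
    · exact .inl ⟨hC, hCc⟩
  · rintro (⟨hC, -⟩ | ⟨hC, hCN⟩)
    · exact hC
    · exact hS.mem_of_isMaximalCyclic hC fun H hH hHc => hCN H ⟨hH, hHc⟩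

lemma noncyclicPart_union_maxCyclicOutside {N : Finset (Subgroup G)}
    (hN : ∀ H ∈ N, ¬ IsCyclic H) : noncyclicPart (N ∪ maxCyclicOutside N) = N := by
  ext H
  simp only [mem_noncyclicPart, Finset.mem_union, mem_maxCyclicOutside]
  exact ⟨fun ⟨hH, hHc⟩ => hH.resolve_right fun h => hHc h.1.1, fun hH => ⟨.inl hH, hN H hH⟩⟩

lemma isCover_union_maxCyclicOutside (hG : ¬ IsCyclic G) {N : Finset (Subgroup G)}
    (hN : ∀ H ∈ N, H ≠ ⊤) : IsCover (N ∪ maxCyclicOutside N) := by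
  refine ⟨fun H hH => ?_, fun g => ?_⟩
  · rcases Finset.mem_union.mp hH with hH | hH
    · exact hN H hH
    · exact (mem_maxCyclicOutside.mp hH).1.ne_top hG
  · obtain ⟨C, hC, hgC⟩ := exists_isMaximalCyclic_mem g
    by_cases hCN : ∀ H ∈ N, ¬ C ≤ H
    · exact ⟨C, Finset.mem_union_right _ (mem_maxCyclicOutside.mpr ⟨hC, hCN⟩), hgC⟩
    · push Not at hCN
      obtain ⟨H, hH, hCH⟩ := hCN
      exact ⟨H, Finset.mem_union_left _ hH, hCH hgC⟩

lemma exists_mem_only_maxCyclicOutside {N : Finset (Subgroup G)} {C : Subgroup G}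
    (hC : C ∈ maxCyclicOutside N) :
    ∃ x : G, ∀ H ∈ N ∪ maxCyclicOutside N, x ∈ H → H = C := by
  obtain ⟨hC, hCN⟩ := mem_maxCyclicOutside.mp hC
  obtain ⟨g, rfl⟩ := C.isCyclic_iff_exists_zpowers_eq_top.mp hC.1
  refine ⟨g, fun H hH hgH => ?_⟩
  have hCH : Subgroup.zpowers g ≤ H := Subgroup.zpowers_le.mpr hgH
  rcases Finset.mem_union.mp hH with hH | hH
  · exact absurd hCH (hCN H hH)
  · exact hC.2 H (mem_maxCyclicOutside.mp hH).1.1 hCH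

/-- An element lying, among the members of `S`, only in `K ∈ N` lies in no maximal cyclic subgroup
outside `N`: such a subgroup is contained in a member of `S`, necessarily other than `K`. -/
lemma IsIrredundantCover.union_maxCyclicOutside (hG : ¬ IsCyclic G) {S N : Finset (Subgroup G)}
    (hS : IsIrredundantCover S) (hNS : N ⊆ S) :
    IsIrredundantCover (N ∪ maxCyclicOutside N) := by
  refine isIrredundantCover_of_forall_exists_mem_only
    (isCover_union_maxCyclicOutside hG fun H hH => hS.1.1 H (hNS hH)) fun K hK => ?_
  rcases Finset.mem_union.mp hK with hK | hK
  · obtain ⟨x, -, hx⟩ := hS.exists_mem_only (hNS hK)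
    refine ⟨x, fun H hH hxH => ?_⟩
    rcases Finset.mem_union.mp hH with hH | hH
    · exact hx H (hNS hH) hxH
    · obtain ⟨hC, hCN⟩ := mem_maxCyclicOutside.mp hH
      obtain ⟨g, rfl⟩ := H.isCyclic_iff_exists_zpowers_eq_top.mp hC.1
      obtain ⟨L, hL, hgL⟩ := hS.1.2 g
      have hCL : Subgroup.zpowers g ≤ L := Subgroup.zpowers_le.mpr hgL
      exact absurd (hx L hL (hCL hxH) ▸ hCL) (hCN K hK)
  · exact exists_mem_only_maxCyclicOutside hK

lemma exists_isIrredundantCover (hG : ¬ IsCyclic G) :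
    ∃ S : Finset (Subgroup G), IsIrredundantCover S :=
  ⟨∅ ∪ maxCyclicOutside ∅, isIrredundantCover_of_forall_exists_mem_only
    (isCover_union_maxCyclicOutside hG (by simp)) fun _ hK =>
      exists_mem_only_maxCyclicOutside (by simpa using hK)⟩

lemma beta_le_two_pow_card {M : Finset (Subgroup G)}
    (hM : ∀ S, IsIrredundantCover S → noncyclicPart S ⊆ M) : beta G ≤ 2 ^ M.card := by
  rw [beta_eq_ncard, ← Finset.card_powerset, ← Set.ncard_coe_finset]
  refine Set.ncard_le_ncard_of_injOn noncyclicPart (fun S hS => by simpa using hM S hS) ?_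
  intro S hS T hT hST
  rw [hS.eq_noncyclicPart_union, hT.eq_noncyclicPart_union, hST]

lemma card_add_one_le_beta (hG : ¬ IsCyclic G) {M : Finset (Subgroup G)}
    (hM : ∀ H ∈ M, ¬ IsCyclic H ∧ ∃ S, IsIrredundantCover S ∧ H ∈ S) : M.card + 1 ≤ beta G := by
  set F := insert ∅ (M.map ⟨singleton, Finset.singleton_injective⟩)
  have hF : F.card = M.card + 1 := by
    rw [Finset.card_insert_of_notMem (by simp), Finset.card_map]
  have hFM : ∀ N ∈ F, N = ∅ ∨ ∃ H ∈ M, N = {H} := by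
    simp [F, eq_comm]
  have hnc : ∀ N ∈ F, ∀ H ∈ N, ¬ IsCyclic H := by
    intro N hN
    rcases hFM N hN with rfl | ⟨H, hH, rfl⟩
    · simp
    · simpa using (hM H hH).1
  have hirr : ∀ N ∈ F, IsIrredundantCover (N ∪ maxCyclicOutside N) := by
    intro N hN
    obtain ⟨S, hS, hNS⟩ : ∃ S, IsIrredundantCover S ∧ N ⊆ S := by
      rcases hFM N hN with rfl | ⟨H, hH, rfl⟩
      · obtain ⟨S, hS⟩ := exists_isIrredundantCover hG
        exact ⟨S, hS, Finset.empty_subset S⟩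
      · obtain ⟨S, hS, hHS⟩ := (hM H hH).2
        exact ⟨S, hS, Finset.singleton_subset_iff.mpr hHS⟩
    exact hS.union_maxCyclicOutside hG hNS
  rw [beta_eq_ncard, ← hF, ← Set.ncard_coe_finset]
  refine Set.ncard_le_ncard_of_injOn (fun N => N ∪ maxCyclicOutside N) hirr ?_
  intro N hN N' hN' h
  rw [← noncyclicPart_union_maxCyclicOutside (hnc N hN),
    ← noncyclicPart_union_maxCyclicOutside (hnc N' hN')]
  exact congrArg noncyclicPart h

end Finite

end

theorem stmt18 {G : Type*} [Group G] [Finite G] (hG : ¬ IsCyclic G)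
    (m : ℕ) (M : Finset (Subgroup G)) (hMcard : M.card = m)
    (hM : ∀ H : Subgroup G, H ∈ M ↔
      (H ≠ ⊤ ∧ ¬ IsCyclic ↥H ∧ ∃ S : Finset (Subgroup G), IsIrredundantCover S ∧ H ∈ S)) :
    m + 1 ≤ beta G ∧ beta G ≤ 2 ^ m := by
  subst hMcard
  refine ⟨card_add_one_le_beta hG fun H hH => ((hM H).mp hH).2, beta_le_two_pow_card ?_⟩
  intro S hS H hH
  obtain ⟨hHS, hHc⟩ := mem_noncyclicPart.mp hH
  exact (hM H).mpr ⟨hS.1.1 H hHS, hHc, S, hS, hHS⟩
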